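/- Let f : ℕ → ℝ be increasing with f(n) → ∞, and suppose the decreasing rearrangement (α̃_n) of the Verblunsky moduli satisfies Σ_{n=0}^{N} |α̃_n| ≤ f(N) for all N. Then limsup over n of [ (n / f(n)) · (maximal gap between arguments of consecutive zeros of Φ_{n+1}^{(β_n)}) ] ≤ 4, for any choice of β_n ∈ ∂𝔻. -/

import Mathlib

open Polynomial Real

/-- The reversed polynomial `Φ*` at level `n`: `Φ*(z) = z^n conj(Φ(1/conj z))`,
i.e. the coefficients are conjugated and reversed (with respect to degree `n`). -/
noncomputable def szegoRev (n : ℕ) (p : Polynomial ℂ) : Polynomial ℂ :=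
  (p.map (starRingEnd ℂ)).reflect n

/-- The monic orthogonal polynomials on the unit circle obtained from the
Szegő recursion with Verblunsky coefficients `α`. -/
noncomputable def szegoPoly (α : ℕ → ℂ) : ℕ → Polynomial ℂ
  | 0 => 1
  | n + 1 =>
    Polynomial.X * szegoPoly α n -
      Polynomial.C ((starRingEnd ℂ) (α n)) * szegoRev n (szegoPoly α n)

/-- The cyclic gap between consecutive zero arguments `θ_1 < ⋯ < θ_{n+1}`,
with the convention `θ_{n+2} = θ_1 + 2π`. -/
noncomputable def cyclicGap (n : ℕ) (θ : Fin (n + 1) → ℝ) (j : Fin (n + 1)) : ℝ :=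
  if h : (j : ℕ) + 1 < n + 1 then θ ⟨(j : ℕ) + 1, h⟩ - θ j else θ 0 + 2 * π - θ j

lemma natDegree_reflect_le {p : Polynomial ℂ} {n : ℕ} (hp : p.natDegree ≤ n) :
    (p.reflect n).natDegree ≤ n := by
  refine Polynomial.natDegree_le_iff_coeff_eq_zero.2 fun i hi => ?_
  rw [Polynomial.coeff_reflect]
  apply Polynomial.coeff_eq_zero_of_natDegree_lt
  rcases le_or_gt i n with h | h
  · rw [Polynomial.revAt_le h]; omega
  · rw [Polynomial.revAt_eq_self_of_lt h]; omega

lemma natDegree_szegoRev_le {p : Polynomial ℂ} {n : ℕ} (hp : p.natDegree ≤ n) :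
    (szegoRev n p).natDegree ≤ n := by
  apply _root_.natDegree_reflect_le
  simpa [Polynomial.natDegree_map] using hp

lemma szegoPoly_natDegree_le (α : ℕ → ℂ) (n : ℕ) : (szegoPoly α n).natDegree ≤ n := by
  induction n with
  | zero => simp [szegoPoly]
  | succ n ih =>
    rw [szegoPoly]
    refine le_trans (Polynomial.natDegree_sub_le _ _) ?_
    simp only [max_le_iff]
    constructor
    · refine le_trans (Polynomial.natDegree_mul_le) ?_
      have := Polynomial.natDegree_X (R := ℂ)
      calc Polynomial.X.natDegree + (szegoPoly α n).natDegree ≤ 1 + n := by omega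
        _ = n + 1 := by omega
    · refine le_trans (Polynomial.natDegree_mul_le) ?_
      simpa using le_trans (natDegree_szegoRev_le ih) (Nat.le_succ n)

lemma szegoPoly_coeff (α : ℕ → ℂ) (n : ℕ) : (szegoPoly α n).coeff n = 1 := by
  induction n with
  | zero => simp [szegoPoly]
  | succ n ih =>
    rw [szegoPoly]
    have h1 : (szegoRev n (szegoPoly α n)).coeff (n + 1) = 0 :=
      Polynomial.coeff_eq_zero_of_natDegree_lt
        (lt_of_le_of_lt (natDegree_szegoRev_le (szegoPoly_natDegree_le α n)) (Nat.lt_succ_self n))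
    simp [Polynomial.coeff_sub, Polynomial.coeff_X_mul, ih, h1]

noncomputable def circ (θ : ℝ) : ℂ := Complex.exp ((θ : ℂ) * Complex.I)

lemma abs_circ (θ : ℝ) : ‖circ θ‖ = 1 := by
  simp [circ, Complex.norm_exp]

lemma circ_ne_zero (θ : ℝ) : circ θ ≠ 0 := Complex.exp_ne_zero _

lemma conj_circ (θ : ℝ) : (starRingEnd ℂ) (circ θ) = (circ θ)⁻¹ := by
  rw [circ, ← Complex.exp_conj, ← Complex.exp_neg]
  congr 1
  simp [Complex.conj_I]

lemma circ_mul_conj (θ : ℝ) : circ θ * (starRingEnd ℂ) (circ θ) = 1 := by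
  rw [conj_circ, mul_inv_cancel₀ (circ_ne_zero θ)]

lemma circ_add_two_pi (θ : ℝ) : circ (θ + 2 * π) = circ θ := by
  rw [circ, circ]
  push_cast
  rw [add_mul, Complex.exp_add]
  simp [Complex.exp_two_pi_mul_I]

lemma continuous_circ : Continuous circ := by
  exact Complex.continuous_exp.comp (by continuity)

lemma circ_inj {a b : ℝ} (ha : a ∈ Set.Ico 0 (2*π)) (hb : b ∈ Set.Ico 0 (2*π))
    (h : circ a = circ b) : a = b := by
  rw [circ, circ, Complex.exp_eq_exp_iff_exists_int] at h
  obtain ⟨k, hk⟩ := h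
  have hk' : (a : ℂ) = ((b + k * (2*π) : ℝ) : ℂ) := by
    have hI : (Complex.I : ℂ) ≠ 0 := Complex.I_ne_zero
    field_simp at hk ⊢
    push_cast
    have : (a : ℂ) * Complex.I = ((b : ℂ) + (k : ℂ) * (2*π)) * Complex.I := by
      rw [hk]; push_cast; ring
    exact mul_right_cancel₀ hI (this.trans (by ring))
  have hab : a = b + k * (2*π) := by exact_mod_cast hk'
  have hπ := Real.pi_pos
  obtain ⟨ha0, ha2⟩ := ha
  obtain ⟨hb0, hb2⟩ := hb
  have : (k : ℝ) = 0 := by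
    rcases lt_trichotomy (k:ℝ) 0 with h|h|h
    · have : (k:ℝ) ≤ -1 := by exact_mod_cast Int.le_of_lt_add_one (by exact_mod_cast (by exact_mod_cast h : k < 0))
      nlinarith
    · exact h
    · have : (1:ℝ) ≤ k := by exact_mod_cast h
      nlinarith
  rw [hab, this]; ring

lemma szegoRev_eval {p : Polynomial ℂ} {n : ℕ} (hp : p.natDegree ≤ n) (θ : ℝ) :
    ((p.map (starRingEnd ℂ)).reflect n).eval (circ θ) =
      circ θ ^ n * (starRingEnd ℂ) (p.eval (circ θ)) := by
  have hz := circ_ne_zero θ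
  have hconj : (starRingEnd ℂ) (circ θ) ≠ 0 := by
    simpa using hz
  letI : Invertible ((starRingEnd ℂ) (circ θ)) := invertibleOfNonzero hconj
  have hinv : ⅟((starRingEnd ℂ) (circ θ)) = circ θ := by
    rw [invOf_eq_inv, conj_circ, inv_inv]
  have hdeg : (p.map (starRingEnd ℂ)).natDegree ≤ n := by
    simpa [Polynomial.natDegree_map] using hp
  have key := Polynomial.eval₂_reflect_mul_pow (RingHom.id ℂ) ((starRingEnd ℂ) (circ θ)) n
      (p.map (starRingEnd ℂ)) hdeg
  rw [hinv] at key
  have h1 : Polynomial.eval₂ (RingHom.id ℂ) (circ θ) ((p.map (starRingEnd ℂ)).reflect n)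
      = ((p.map (starRingEnd ℂ)).reflect n).eval (circ θ) := rfl
  have h2 : Polynomial.eval₂ (RingHom.id ℂ) ((starRingEnd ℂ) (circ θ)) (p.map (starRingEnd ℂ))
      = (starRingEnd ℂ) (p.eval (circ θ)) := by
    rw [show Polynomial.eval₂ (RingHom.id ℂ) ((starRingEnd ℂ) (circ θ)) (p.map (starRingEnd ℂ))
        = (p.map (starRingEnd ℂ)).eval ((starRingEnd ℂ) (circ θ)) from rfl,
      Polynomial.eval_map, Polynomial.eval₂_hom]
  rw [h1, h2] at key
  have hpow : (starRingEnd ℂ) (circ θ) ^ n = (circ θ ^ n)⁻¹ := by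
    rw [conj_circ, inv_pow]
  rw [hpow] at key
  field_simp at key
  rw [key]

noncomputable def sP (α : ℕ → ℂ) (n : ℕ) (θ : ℝ) : ℂ := (szegoPoly α n).eval (circ θ)
noncomputable def sQ (α : ℕ → ℂ) (n : ℕ) (θ : ℝ) : ℂ := (szegoRev n (szegoPoly α n)).eval (circ θ)
noncomputable def sU (α : ℕ → ℂ) (n : ℕ) (θ : ℝ) : ℂ := 1 - α n * circ θ * sP α n θ / sQ α n θ
noncomputable def sA (α : ℕ → ℂ) (n : ℕ) (θ : ℝ) : ℝ :=
  ∑ k ∈ Finset.range n, (Complex.log (sU α k θ)).im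

lemma sQ_eq (α : ℕ → ℂ) (n : ℕ) (θ : ℝ) :
    sQ α n θ = circ θ ^ n * (starRingEnd ℂ) (sP α n θ) :=
  szegoRev_eval (szegoPoly_natDegree_le α n) θ

lemma sP_eq (α : ℕ → ℂ) (n : ℕ) (θ : ℝ) :
    sP α n θ = circ θ ^ n * (starRingEnd ℂ) (sQ α n θ) := by
  rw [sQ_eq, map_mul, map_pow, Complex.conj_conj, ← mul_assoc, ← mul_pow, circ_mul_conj,
    one_pow, one_mul]

lemma abs_sQ_eq (α : ℕ → ℂ) (n : ℕ) (θ : ℝ) :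
    ‖sQ α n θ‖ = ‖sP α n θ‖ := by
  rw [sQ_eq]
  simp [abs_circ]

lemma sP_succ (α : ℕ → ℂ) (n : ℕ) (θ : ℝ) :
    sP α (n+1) θ = circ θ * sP α n θ - (starRingEnd ℂ) (α n) * sQ α n θ := by
  simp [sP, sQ, szegoPoly]

lemma sQ_succ (α : ℕ → ℂ) (n : ℕ) (θ : ℝ) :
    sQ α (n+1) θ = sQ α n θ - α n * circ θ * sP α n θ := by
  have hz := circ_ne_zero θ
  rw [sQ_eq α (n+1) θ, sP_succ, map_sub, map_mul, map_mul, Complex.conj_conj, conj_circ,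
    sQ_eq α n θ, map_mul, map_pow, Complex.conj_conj, conj_circ]
  simp only [inv_pow]
  field_simp
  ring

lemma sQ_zero (α : ℕ → ℂ) (θ : ℝ) : sQ α 0 θ = 1 := by
  simp [sQ, szegoRev, szegoPoly]

lemma sP_zero (α : ℕ → ℂ) (θ : ℝ) : sP α 0 θ = 1 := by
  simp [sP, szegoPoly]

lemma sQ_ne (α : ℕ → ℂ) (hα : ∀ j, ‖α j‖ < 1) (n : ℕ) (θ : ℝ) :
    sQ α n θ ≠ 0 := by
  induction n with
  | zero => rw [sQ_zero]; exact one_ne_zero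
  | succ n ih =>
    rw [sQ_succ]
    intro h
    have h3 : sQ α n θ = α n * circ θ * sP α n θ := by linear_combination h
    have habs : ‖sQ α n θ‖ = ‖α n‖ * ‖sQ α n θ‖ := by
      calc ‖sQ α n θ‖ = ‖α n‖ * ‖sP α n θ‖ := by
            rw [h3]; simp [map_mul, abs_circ]
        _ = ‖α n‖ * ‖sQ α n θ‖ := by rw [abs_sQ_eq]
    have hpos : 0 < ‖sQ α n θ‖ := norm_pos_iff.2 ih
    nlinarith [hα n]

lemma abs_one_sub_sU (α : ℕ → ℂ) (hα : ∀ j, ‖α j‖ < 1) (n : ℕ) (θ : ℝ) :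
    ‖1 - sU α n θ‖ = ‖α n‖ := by
  have hq := sQ_ne α hα n θ
  rw [sU]
  rw [show (1 : ℂ) - (1 - α n * circ θ * sP α n θ / sQ α n θ)
      = α n * circ θ * sP α n θ / sQ α n θ by ring]
  rw [norm_div, norm_mul, norm_mul, abs_circ, ← abs_sQ_eq]
  rw [mul_one, mul_div_assoc, div_self (by simpa using hq), mul_one]

lemma sU_re_pos (α : ℕ → ℂ) (hα : ∀ j, ‖α j‖ < 1) (n : ℕ) (θ : ℝ) :
    0 < (sU α n θ).re := by
  have h := abs_one_sub_sU α hα n θ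
  have h2 : (1 - sU α n θ).re ≤ ‖1 - sU α n θ‖ := Complex.re_le_norm _
  have h3 : (1 - sU α n θ).re = 1 - (sU α n θ).re := by simp
  have := hα n
  linarith

lemma sU_ne (α : ℕ → ℂ) (hα : ∀ j, ‖α j‖ < 1) (n : ℕ) (θ : ℝ) :
    sU α n θ ≠ 0 := by
  intro h
  have := sU_re_pos α hα n θ
  rw [h] at this
  simp at this

lemma sQ_succ_mul (α : ℕ → ℂ) (hα : ∀ j, ‖α j‖ < 1) (n : ℕ) (θ : ℝ) :
    sQ α (n+1) θ = sQ α n θ * sU α n θ := by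
  have hq := sQ_ne α hα n θ
  rw [sQ_succ, sU]
  field_simp

lemma exp_sum_log (α : ℕ → ℂ) (hα : ∀ j, ‖α j‖ < 1) (n : ℕ) (θ : ℝ) :
    Complex.exp (∑ k ∈ Finset.range n, Complex.log (sU α k θ)) = sQ α n θ := by
  induction n with
  | zero => simp [sQ_zero]
  | succ n ih =>
    rw [Finset.sum_range_succ, Complex.exp_add, ih, Complex.exp_log (sU_ne α hα n θ),
      sQ_succ_mul α hα n θ]

lemma abs_arg_le_arcsin {w : ℂ} {r : ℝ} (hr : r < 1) (h : ‖w - 1‖ ≤ r) :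
    |Complex.arg w| ≤ Real.arcsin r := by
  have hr0 : 0 ≤ r := le_trans (norm_nonneg _) h
  set x := w.re with hx
  set y := w.im with hy
  have hsq : (x - 1)^2 + y^2 ≤ r^2 := by
    have := Complex.sq_norm (w - 1)
    rw [Complex.normSq_apply] at this
    have h2 : ‖w - 1‖ ^ 2 ≤ r ^ 2 := by
      apply pow_le_pow_left₀ (norm_nonneg _) h
    simp only [Complex.sub_re, Complex.sub_im, Complex.one_re, Complex.one_im, sub_zero] at this
    nlinarith [this]
  have hxpos : 0 < x := by
    have : |x - 1| ≤ ‖w - 1‖ := by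
      simpa using Complex.abs_re_le_norm (w - 1)
    have := abs_le.1 (le_trans this h)
    linarith
  have hw0 : w ≠ 0 := by
    intro hw
    have : x = 0 := by rw [hx, hw]; simp
    linarith
  have ha : 0 < ‖w‖ := norm_pos_iff.2 hw0
  have hax : x ≤ ‖w‖ := Complex.re_le_norm w
  have ha2 : (‖w‖)^2 = x^2 + y^2 := by
    rw [Complex.sq_norm, Complex.normSq_apply]; ring
  have hy2 : y^2 ≤ r^2 * (‖w‖)^2 := by
    nlinarith [sq_nonneg (x - (1 - r^2)),
      mul_nonneg (by nlinarith : (0:ℝ) ≤ 1 - r^2) (by nlinarith : (0:ℝ) ≤ r^2 - ((x-1)^2 + y^2))]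
  have hyabs : |y| ≤ r * ‖w‖ := by
    have h1 : |y|^2 ≤ (r * ‖w‖)^2 := by rw [sq_abs]; nlinarith
    exact abs_le_abs (by nlinarith [le_abs_self y, abs_nonneg y, mul_nonneg hr0 ha.le]) (by nlinarith [neg_abs_le y, abs_nonneg y, mul_nonneg hr0 ha.le]) |>.trans_eq (abs_of_nonneg (mul_nonneg hr0 ha.le))
  have hsin : Real.sin (Complex.arg w) = y / ‖w‖ := Complex.sin_arg w
  have hsinabs : |Real.sin (Complex.arg w)| ≤ r := by
    rw [hsin, abs_div, abs_of_pos ha]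
    rw [div_le_iff₀ ha]
    exact hyabs
  have hargpi : |Complex.arg w| < π / 2 :=
    Complex.abs_arg_lt_pi_div_two_iff.2 (Or.inl hxpos)
  have harg : Complex.arg w = Real.arcsin (Real.sin (Complex.arg w)) := by
    rw [Real.arcsin_sin (by linarith [abs_le.1 hargpi.le]) (by linarith [abs_le.1 hargpi.le])]
  rcases le_or_gt 0 (Complex.arg w) with hpos | hneg
  · rw [abs_of_nonneg hpos, harg]
    apply Real.monotone_arcsin
    calc Real.sin (Complex.arg w) ≤ |Real.sin (Complex.arg w)| := le_abs_self _
      _ ≤ r := hsinabs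
  · rw [abs_of_neg hneg]
    rw [harg]
    rw [← Real.arcsin_neg]
    apply Real.monotone_arcsin
    calc -Real.sin (Complex.arg w) ≤ |Real.sin (Complex.arg w)| := neg_le_abs _
      _ ≤ r := hsinabs

lemma abs_sA_le (α : ℕ → ℂ) (hα : ∀ j, ‖α j‖ < 1) (n : ℕ) (θ : ℝ) :
    |sA α n θ| ≤ ∑ k ∈ Finset.range n, Real.arcsin (‖α k‖) := by
  refine le_trans (Finset.abs_sum_le_sum_abs _ _) (Finset.sum_le_sum fun k _ => ?_)
  rw [Complex.log_im]
  apply abs_arg_le_arcsin (hα k)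
  rw [show sU α k θ - 1 = -(1 - sU α k θ) by ring, norm_neg]
  exact le_of_eq (abs_one_sub_sU α hα k θ)

lemma continuous_sP (α : ℕ → ℂ) (n : ℕ) : Continuous (sP α n) :=
  (Polynomial.continuous _).comp continuous_circ

lemma continuous_sQ (α : ℕ → ℂ) (n : ℕ) : Continuous (sQ α n) :=
  (Polynomial.continuous _).comp continuous_circ

lemma continuous_sU (α : ℕ → ℂ) (hα : ∀ j, ‖α j‖ < 1) (n : ℕ) :
    Continuous (sU α n) := by
  apply Continuous.sub continuous_const
  exact ((continuous_const.mul continuous_circ).mul (continuous_sP α n)).div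
    (continuous_sQ α n) (fun θ => sQ_ne α hα n θ)

lemma continuous_sA (α : ℕ → ℂ) (hα : ∀ j, ‖α j‖ < 1) (n : ℕ) :
    Continuous (sA α n) := by
  apply continuous_finset_sum
  intro k _
  rw [continuous_iff_continuousAt]
  intro θ
  have h1 : ContinuousAt Complex.arg (sU α k θ) :=
    Complex.continuousAt_arg (Complex.mem_slitPlane_iff.2 (Or.inl (sU_re_pos α hα k θ)))
  have h2 : ContinuousAt (sU α k) θ := (continuous_sU α hα k).continuousAt
  have : ContinuousAt (fun t => Complex.arg (sU α k t)) θ := h1.comp h2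
  simpa only [Complex.log_im] using this

lemma sA_periodic (α : ℕ → ℂ) (n : ℕ) (θ : ℝ) : sA α n (θ + 2 * π) = sA α n θ := by
  have hP : ∀ m, sP α m (θ + 2*π) = sP α m θ := fun m => by rw [sP, sP, circ_add_two_pi]
  have hQ : ∀ m, sQ α m (θ + 2*π) = sQ α m θ := fun m => by rw [sQ, sQ, circ_add_two_pi]
  unfold sA
  congr 1
  ext k
  rw [sU, sU, hP, hQ, circ_add_two_pi]

lemma conj_sQ_div (α : ℕ → ℂ) (hα : ∀ j, ‖α j‖ < 1) (n : ℕ) (θ : ℝ) :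
    (starRingEnd ℂ) (sQ α n θ) / sQ α n θ = Complex.exp (-(2 * (sA α n θ : ℝ) : ℂ) * Complex.I) := by
  have hL := exp_sum_log α hα n θ
  set L := ∑ k ∈ Finset.range n, Complex.log (sU α k θ) with hLdef
  have him : L.im = sA α n θ := by
    rw [hLdef, Complex.im_sum]; rfl
  rw [← hL, ← Complex.exp_conj, ← Complex.exp_sub]
  congr 1
  have := Complex.sub_conj L
  have hsub : (starRingEnd ℂ) L - L = -(2 * L.im * Complex.I) := by
    rw [← neg_sub L]
    rw [this]
    push_cast
    ring
  rw [hsub, him]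
  push_cast
  ring

lemma root_iff (α : ℕ → ℂ) (hα : ∀ j, ‖α j‖ < 1) (n : ℕ) (β : ℂ) (θ : ℝ) :
    (Polynomial.X * szegoPoly α n -
        Polynomial.C ((starRingEnd ℂ) β) * szegoRev n (szegoPoly α n)).eval (circ θ) = 0 ↔
      Complex.exp ((((n:ℝ)+1) * θ - 2 * sA α n θ : ℝ) * Complex.I) = (starRingEnd ℂ) β := by
  have hq := sQ_ne α hα n θ
  have heval : (Polynomial.X * szegoPoly α n -
      Polynomial.C ((starRingEnd ℂ) β) * szegoRev n (szegoPoly α n)).eval (circ θ)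
      = circ θ * sP α n θ - (starRingEnd ℂ) β * sQ α n θ := by
    simp [sP, sQ]
  have hkey : circ θ * sP α n θ
      = Complex.exp ((((n:ℝ)+1) * θ - 2 * sA α n θ : ℝ) * Complex.I) * sQ α n θ := by
    rw [sP_eq α n θ]
    have h1 : circ θ * (circ θ ^ n * (starRingEnd ℂ) (sQ α n θ))
        = circ θ ^ (n+1) * ((starRingEnd ℂ) (sQ α n θ) / sQ α n θ) * sQ α n θ := by
      field_simp; ring
    rw [h1, conj_sQ_div α hα n θ]
    have h2 : circ θ ^ (n+1) = Complex.exp ((((n:ℝ)+1) * θ : ℝ) * Complex.I) := by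
      rw [circ, ← Complex.exp_nat_mul]
      congr 1
      push_cast
      ring
    rw [h2, ← Complex.exp_add]
    congr 2
    push_cast
    ring
  rw [heval, hkey]
  constructor
  · intro h
    have := sub_eq_zero.1 h
    exact mul_right_cancel₀ hq this
  · intro h
    rw [h]
    ring

lemma P_natDegree_le (α : ℕ → ℂ) (n : ℕ) (β : ℂ) :
    (Polynomial.X * szegoPoly α n -
      Polynomial.C ((starRingEnd ℂ) β) * szegoRev n (szegoPoly α n)).natDegree ≤ n + 1 := by
  refine le_trans (Polynomial.natDegree_sub_le _ _) ?_
  simp only [max_le_iff]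
  constructor
  · refine le_trans (Polynomial.natDegree_mul_le) ?_
    have := Polynomial.natDegree_X (R := ℂ)
    have := szegoPoly_natDegree_le α n
    omega
  · refine le_trans (Polynomial.natDegree_mul_le) ?_
    have := natDegree_szegoRev_le (szegoPoly_natDegree_le α n)
    simp only [Polynomial.natDegree_C]
    omega

lemma P_coeff (α : ℕ → ℂ) (n : ℕ) (β : ℂ) :
    (Polynomial.X * szegoPoly α n -
      Polynomial.C ((starRingEnd ℂ) β) * szegoRev n (szegoPoly α n)).coeff (n+1) = 1 := by
  have h1 : (szegoRev n (szegoPoly α n)).coeff (n + 1) = 0 :=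
    Polynomial.coeff_eq_zero_of_natDegree_lt
      (lt_of_le_of_lt (natDegree_szegoRev_le (szegoPoly_natDegree_le α n)) (Nat.lt_succ_self n))
  simp [Polynomial.coeff_sub, Polynomial.coeff_X_mul, szegoPoly_coeff α n, h1]

lemma root_count (α : ℕ → ℂ) (n : ℕ) (β : ℂ)
    (θ : Fin (n+1) → ℝ) (hmono : StrictMono θ)
    (hIco : ∀ j, θ j ∈ Set.Ico (0:ℝ) (2*π))
    (hroot : ∀ j, (Polynomial.X * szegoPoly α n -
        Polynomial.C ((starRingEnd ℂ) β) * szegoRev n (szegoPoly α n)).eval (circ (θ j)) = 0)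
    (τ' : ℝ) (hτ : τ' ∈ Set.Ico (0:ℝ) (2*π)) (hne : ∀ l, τ' ≠ θ l)
    (hτroot : (Polynomial.X * szegoPoly α n -
        Polynomial.C ((starRingEnd ℂ) β) * szegoRev n (szegoPoly α n)).eval (circ τ') = 0) :
    False := by
  set P := Polynomial.X * szegoPoly α n -
      Polynomial.C ((starRingEnd ℂ) β) * szegoRev n (szegoPoly α n) with hP
  set g : Fin (n+2) → ℝ := fun i => if h : (i:ℕ) < n+1 then θ ⟨(i:ℕ), h⟩ else τ' with hg
  have hgIco : ∀ i, g i ∈ Set.Ico (0:ℝ) (2*π) := by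
    intro i
    rw [hg]
    dsimp only
    split
    · exact hIco _
    · exact hτ
  have hginj : Function.Injective g := by
    intro i i' heq
    rw [hg] at heq
    dsimp only at heq
    split at heq <;> split at heq
    · next h1 h2 =>
      have := hmono.injective heq
      exact Fin.ext (by simpa using congrArg Fin.val this)
    · next h1 h2 => exact absurd heq.symm (hne _)
    · next h1 h2 => exact absurd heq (hne _)
    · next h1 h2 => exact Fin.ext (by omega)
  have hcinj : Function.Injective (fun i => circ (g i)) := by
    intro i i' heq
    exact hginj (circ_inj (hgIco i) (hgIco i') heq)
  have heval : ∀ i, P.eval (circ (g i)) = 0 := by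
    intro i
    rw [hg]
    dsimp only
    split
    · exact hroot _
    · exact hτroot
  have hPz : P = 0 := by
    apply Polynomial.eq_zero_of_natDegree_lt_card_of_eval_eq_zero P hcinj heval
    have h := P_natDegree_le α n β
    rw [← hP] at h
    simp only [Fintype.card_fin]
    omega
  have := P_coeff α n β
  rw [← hP, hPz] at this
  simp at this

lemma exp_real_eq (x y : ℝ) (h : Complex.exp ((x:ℂ) * Complex.I) = Complex.exp ((y:ℂ) * Complex.I)) :
    ∃ m : ℤ, x - y = 2*π*m := by
  rw [Complex.exp_eq_exp_iff_exists_int] at h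
  obtain ⟨m, hm⟩ := h
  refine ⟨m, ?_⟩
  have h2 : (x:ℂ) = (y:ℂ) + (m:ℂ)*(2*(π:ℂ)) :=
    mul_right_cancel₀ Complex.I_ne_zero (by rw [hm]; push_cast; ring)
  have h3 : x = y + (m:ℝ)*(2*π) := by exact_mod_cast h2
  linarith

lemma gap_bound (α : ℕ → ℂ) (hα : ∀ j, ‖α j‖ < 1) (n : ℕ) (β : ℂ)
    (θ : Fin (n+1) → ℝ) (hmono : StrictMono θ)
    (hIco : ∀ j, θ j ∈ Set.Ico (0:ℝ) (2*π))
    (hroot : ∀ j, (Polynomial.X * szegoPoly α n -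
        Polynomial.C ((starRingEnd ℂ) β) * szegoRev n (szegoPoly α n)).eval (circ (θ j)) = 0)
    (j : Fin (n+1)) :
    ((n:ℝ)+1) * cyclicGap n θ j ≤
      2*π + 4 * ∑ k ∈ Finset.range n, Real.arcsin (‖α k‖) := by
  set S := ∑ k ∈ Finset.range n, Real.arcsin (‖α k‖) with hS
  set W : ℝ → ℝ := fun t => ((n:ℝ)+1) * t - 2 * sA α n t with hW
  have hπ := Real.pi_pos
  have hWcont : Continuous W := by
    apply Continuous.sub (continuous_const.mul continuous_id)
    exact continuous_const.mul (continuous_sA α hα n)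
  have hWroot : ∀ i : Fin (n+1), Complex.exp ((W (θ i) : ℂ) * Complex.I) = (starRingEnd ℂ) β :=
    fun i => (root_iff α hα n β (θ i)).1 (hroot i)
  -- common part, abstracted over the endpoints
  have main : ∀ a b : ℝ, a < b →
      Complex.exp ((W a : ℂ) * Complex.I) = (starRingEnd ℂ) β →
      Complex.exp ((W b : ℂ) * Complex.I) = (starRingEnd ℂ) β →
      (∀ τ ∈ Set.Ioo a b, ∃ τ' ∈ Set.Ico (0:ℝ) (2*π), circ τ' = circ τ ∧ ∀ l, τ' ≠ θ l) →
      W b - W a ≤ 2 * π := by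
    intro a b hab ha hb hnorm
    obtain ⟨m, hm⟩ := exp_real_eq (W b) (W a) (by rw [ha, hb])
    have hm1 : (m : ℝ) ≤ 1 := by
      by_contra hm2
      push_neg at hm2
      have hm2' : (2 : ℝ) ≤ m := by exact_mod_cast (by exact_mod_cast hm2 : (1:ℤ) < m)
      have hmem : W a + 2*π ∈ Set.Ioo (W a) (W b) := by
        constructor
        · linarith
        · nlinarith
      obtain ⟨τ, hτIoo, hτW⟩ := intermediate_value_Ioo hab.le hWcont.continuousOn hmem
      obtain ⟨τ', hτ'Ico, hτ'circ, hτ'ne⟩ := hnorm τ hτIoo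
      -- τ' is a root
      have hτroot : Complex.exp ((W τ' : ℂ) * Complex.I) = (starRingEnd ℂ) β ∨ True := Or.inr trivial
      have hWτ : Complex.exp ((W τ : ℂ) * Complex.I) = (starRingEnd ℂ) β := by
        rw [hτW]
        push_cast
        rw [add_mul, Complex.exp_add, ha]
        have : Complex.exp ((2*(π:ℂ)) * Complex.I) = 1 := by
          rw [show (2*(π:ℂ)) * Complex.I = 2*(π:ℂ)*Complex.I by ring, Complex.exp_two_pi_mul_I]
        rw [this, mul_one]
      have hroot_τ : (Polynomial.X * szegoPoly α n -
          Polynomial.C ((starRingEnd ℂ) β) * szegoRev n (szegoPoly α n)).eval (circ τ) = 0 :=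
        (root_iff α hα n β τ).2 hWτ
      have hroot_τ' : (Polynomial.X * szegoPoly α n -
          Polynomial.C ((starRingEnd ℂ) β) * szegoRev n (szegoPoly α n)).eval (circ τ') = 0 := by
        rw [hτ'circ]; exact hroot_τ
      exact root_count α n β θ hmono hIco hroot τ' hτ'Ico hτ'ne hroot_τ'
    nlinarith
  rcases lt_or_ge ((j:ℕ)+1) (n+1) with h | h
  · -- interior gap
    have hgap : cyclicGap n θ j = θ ⟨(j:ℕ)+1, h⟩ - θ j := by rw [cyclicGap, dif_pos h]
    set a := θ j with hadef
    set b := θ ⟨(j:ℕ)+1, h⟩ with hbdef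
    have hab : a < b := hmono (by rw [Fin.lt_def]; simp)
    have hWb := main a b hab (hWroot j) (hWroot ⟨(j:ℕ)+1, h⟩) ?_
    · have hAa := abs_sA_le α hα n a
      have hAb := abs_sA_le α hα n b
      rw [hgap]
      have hexp : W b - W a = ((n:ℝ)+1) * (b - a) - 2*(sA α n b - sA α n a) := by
        rw [hW]; ring
      have h1 := abs_le.1 hAa
      have h2 := abs_le.1 hAb
      linarith
    · intro τ hτ
      refine ⟨τ, ⟨?_, ?_⟩, rfl, ?_⟩
      · exact le_trans (hIco j).1 hτ.1.le
      · exact lt_trans hτ.2 (hIco _).2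
      · intro l
        rcases le_or_gt (l:ℕ) (j:ℕ) with hl | hl
        · have : θ l ≤ θ j := hmono.monotone (by rwa [Fin.le_def])
          have := hτ.1
          intro heq; rw [heq] at this; linarith
        · have : θ ⟨(j:ℕ)+1, h⟩ ≤ θ l := hmono.monotone (by rw [Fin.le_def]; simpa using hl)
          have h2 := hτ.2
          intro heq; rw [heq] at h2; linarith
  · -- wrap-around gap
    have hjn : (j:ℕ) = n := by have := j.isLt; omega
    have hgap : cyclicGap n θ j = θ 0 + 2*π - θ j := by rw [cyclicGap, dif_neg (by omega)]
    set a := θ j with hadef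
    set b := θ 0 + 2*π with hbdef
    have hab : a < b := by
      have := (hIco j).2
      have := (hIco 0).1
      rw [hbdef]
      linarith
    have hWb2 : W b = W (θ 0) + 2*π*((n:ℝ)+1) := by
      rw [hW, hbdef]
      dsimp only
      rw [sA_periodic]
      ring
    have hexpb : Complex.exp ((W b : ℂ) * Complex.I) = (starRingEnd ℂ) β := by
      have hone : Complex.exp ((2*(π:ℂ)*(((n:ℂ))+1)) * Complex.I) = 1 := by
        have h := Complex.exp_int_mul_two_pi_mul_I ((n:ℤ)+1)
        have h2 : (((n:ℤ)+1 : ℤ) : ℂ) * (2*(π:ℂ)*Complex.I) = (2*(π:ℂ)*((n:ℂ)+1)) * Complex.I := by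
          push_cast; ring
        rwa [h2] at h
      rw [hWb2]
      push_cast
      rw [add_mul, Complex.exp_add, hWroot 0, hone, mul_one]
    have hWb := main a b hab (hWroot j) hexpb ?_
    · have hAa := abs_sA_le α hα n a
      have hA0 := abs_sA_le α hα n (θ 0)
      rw [hgap]
      have hexp : W b - W a = ((n:ℝ)+1) * (b - a) - 2*(sA α n b - sA α n a) := by
        rw [hW]; ring
      have hsAb : sA α n b = sA α n (θ 0) := by rw [hbdef, sA_periodic]
      rw [hsAb] at hexp
      have h1 := abs_le.1 hAa
      have h2 := abs_le.1 hA0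
      have : ((n:ℝ)+1) * (θ 0 + 2*π - θ j) = ((n:ℝ)+1) * (b - a) := by rw [hbdef, hadef]
      linarith
    · intro τ hτ
      have hj0 : (0:ℝ) ≤ θ j := (hIco j).1
      have hθ0 : θ 0 < 2*π := (hIco 0).2
      by_cases hτ2 : τ < 2*π
      · refine ⟨τ, ⟨by linarith [hτ.1], hτ2⟩, rfl, ?_⟩
        intro l heq
        have hlj : l ≤ j := by rw [Fin.le_def]; omega
        have : θ l ≤ θ j := hmono.monotone hlj
        have := hτ.1
        rw [heq] at this
        linarith
      · push_neg at hτ2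
        refine ⟨τ - 2*π, ⟨by linarith, by linarith [hτ.2]⟩, ?_, ?_⟩
        · conv_rhs => rw [show τ = (τ - 2*π) + 2*π by ring]
          rw [circ_add_two_pi]
        · intro l heq
          have : θ 0 ≤ θ l := hmono.monotone (Fin.zero_le l)
          have h2 := hτ.2
          rw [← heq] at this
          rw [hbdef] at h2
          linarith


lemma fin_strictMono_le {m : ℕ} {f : Fin m → ℕ} (hf : StrictMono f) :
    ∀ i : Fin m, (i : ℕ) ≤ f i := by
  suffices h : ∀ v, ∀ (hv : v < m), v ≤ f ⟨v, hv⟩ by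
    intro i; exact h i i.isLt
  intro v
  induction v with
  | zero => omega
  | succ k ih =>
    intro hv
    have hk : k < m := by omega
    have h1 := ih hk
    have h2 : f ⟨k, hk⟩ < f ⟨k+1, hv⟩ := hf (by simp [Fin.lt_def])
    omega

lemma sum_le_rearrange {g : ℕ → ℝ} (hg : Antitone g) (T : Finset ℕ) :
    ∑ j ∈ T, g j ≤ ∑ i ∈ Finset.range T.card, g i := by
  set e := T.orderEmbOfFin rfl with he
  have himg : Finset.image (fun i => e i) Finset.univ = T := by
    apply Finset.coe_injective
    rw [Finset.coe_image, Finset.coe_univ, Set.image_univ]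
    exact Finset.range_orderEmbOfFin T rfl
  have h1 : ∑ i ∈ Finset.image (fun i => e i) Finset.univ, g i = ∑ i : Fin T.card, g (e i) :=
    Finset.sum_image (fun a _ b _ h => e.injective h)
  rw [himg] at h1
  rw [h1, ← Fin.sum_univ_eq_sum_range]
  apply Finset.sum_le_sum
  intro i _
  exact hg (fin_strictMono_le e.strictMono i)

lemma arcsin_le_mul {δ x : ℝ} (hδ : 0 < δ) (hδ1 : δ ≤ 1) (hx0 : 0 ≤ x) (hx1 : x ≤ 1/2)
    (hx2 : x^2 ≤ δ/2) : Real.arcsin x ≤ (1+δ)*x := by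
  rcases eq_or_lt_of_le hx0 with h | h
  · rw [← h]; simp
  have hπ3 := Real.pi_gt_three
  have hy1 : (1+δ)*x ≤ 1 := by nlinarith
  rw [Real.arcsin_le_iff_le_sin ⟨by linarith, by linarith⟩
    ⟨by nlinarith, by nlinarith⟩]
  have hcube := Real.sin_gt_sub_cube (by nlinarith : 0 < (1+δ)*x)
  have hfac : (1+δ)^3 ≤ 8 := by
    have h2 : δ^2 ≤ 1 := by nlinarith
    have h3 : δ^3 ≤ 1 := by nlinarith
    nlinarith
  have h8 : ((1+δ)*x)^3 ≤ 8 * x^3 := by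
    rw [mul_pow]
    exact mul_le_mul_of_nonneg_right hfac (pow_nonneg hx0 3)
  have h9 : x^3 ≤ x * (δ/2) := by
    nlinarith [mul_nonneg h.le (by linarith : (0:ℝ) ≤ δ/2 - x^2)]
  linarith [mul_pos hδ h]

/-- Theorem 2 of the paper: if the decreasing rearrangement `α̃` of the Verblunsky
coefficients satisfies `Σ_{n=0}^N |α̃_n| ≤ f(N)` for an increasing `f → ∞`, then
`limsup_n (n / f(n)) · (maximal cyclic zero gap of Φ_{n+1}^{(β_n)}) ≤ 4`. -/
theorem stmt17 (α : ℕ → ℂ) (hα : ∀ j, ‖α j‖ < 1)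
    (hα0 : Filter.Tendsto α Filter.atTop (nhds 0))
    (σ : Equiv.Perm ℕ) (hdec : Antitone fun k => ‖α (σ k)‖)
    (f : ℕ → ℝ) (hf : Monotone f)
    (hftop : Filter.Tendsto f Filter.atTop Filter.atTop)
    (hsum : ∀ N : ℕ, ∑ k ∈ Finset.range (N + 1), ‖α (σ k)‖ ≤ f N) :
    ∀ ε > (0 : ℝ), ∃ N₀ : ℕ, ∀ n ≥ N₀, ∀ β : ℂ, ‖β‖ = 1 →
      ∀ θ : Fin (n + 1) → ℝ, StrictMono θ →
        (∀ j, θ j ∈ Set.Ico (0 : ℝ) (2 * π)) →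
        (∀ j, (Polynomial.X * szegoPoly α n -
            Polynomial.C ((starRingEnd ℂ) β) * szegoRev n (szegoPoly α n)).eval
              (Complex.exp ((θ j : ℂ) * Complex.I)) = 0) →
        ∀ j, ((n : ℝ) / f n) * cyclicGap n θ j ≤ 4 + ε := by
  intro ε hε
  have hπ := Real.pi_pos
  set δ := min (ε/8) 1 with hδdef
  have hδpos : 0 < δ := lt_min (by linarith) one_pos
  have hδ1 : δ ≤ 1 := min_le_right _ _
  have hδε : δ ≤ ε/8 := min_le_left _ _
  set x₀ := min (Real.sqrt (δ/2)) (1/2 : ℝ) with hx₀def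
  have hx₀pos : 0 < x₀ := lt_min (Real.sqrt_pos.2 (by linarith)) (by norm_num)
  set a : ℕ → ℝ := fun k => ‖α (σ k)‖ with hadef
  have ha0 : ∀ k, 0 ≤ a k := fun k => norm_nonneg _
  have hatend : Filter.Tendsto a Filter.atTop (nhds 0) := by
    have hσ : Filter.Tendsto (fun k => σ k) Filter.atTop Filter.atTop := by
      rw [← Nat.cofinite_eq_atTop]
      exact σ.injective.tendsto_cofinite
    have h1 : Filter.Tendsto (fun k => α (σ k)) Filter.atTop (nhds 0) := hα0.comp hσ
    have h2 := (continuous_norm.tendsto 0).comp h1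
    simpa [hadef, Function.comp_def] using h2
  obtain ⟨K, hK⟩ : ∃ K, ∀ k ≥ K, a k ≤ x₀ := by
    have h1 : ∀ᶠ k in Filter.atTop, a k < x₀ := hatend.eventually_lt_const hx₀pos
    obtain ⟨K, hK⟩ := Filter.eventually_atTop.1 h1
    exact ⟨K, fun k hk => (hK k hk).le⟩
  set C₁ := (4*π + 4*π*(K:ℝ))/ε with hC₁def
  obtain ⟨N₁, hN₁⟩ : ∃ N₁, ∀ n ≥ N₁, max 1 C₁ ≤ f n :=
    Filter.eventually_atTop.1 (hftop.eventually_ge_atTop (max 1 C₁))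
  refine ⟨max N₁ (K+1), ?_⟩
  intro n hn β hβ θ hmono hIco hroot j
  have hn1 : 1 ≤ n := by omega
  have hnK : K ≤ n := by omega
  have hfn1 : 1 ≤ f n := le_trans (le_max_left _ _) (hN₁ n (by omega))
  have hfnC : C₁ ≤ f n := le_trans (le_max_right _ _) (hN₁ n (by omega))
  have hfpos : 0 < f n := by linarith
  have hgap := gap_bound α hα n β θ hmono hIco (fun i => hroot i) j
  set S := ∑ k ∈ Finset.range n, Real.arcsin (‖α k‖) with hSdef
  have hganti : Antitone (fun k => Real.arcsin (a k)) :=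
    fun x y hxy => Real.monotone_arcsin (hdec hxy)
  have hrearr : S ≤ ∑ i ∈ Finset.range n, Real.arcsin (a i) := by
    have hT : (Finset.image (fun k => σ.symm k) (Finset.range n)).card = n := by
      rw [Finset.card_image_of_injective _ σ.symm.injective, Finset.card_range]
    have h1 : S = ∑ i ∈ Finset.image (fun k => σ.symm k) (Finset.range n),
        Real.arcsin (a i) := by
      rw [Finset.sum_image (fun x _ y _ h => σ.symm.injective h)]
      exact Finset.sum_congr rfl (fun x _ => by simp [hadef])
    rw [h1]
    have h2 := sum_le_rearrange hganti (Finset.image (fun k => σ.symm k) (Finset.range n))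
    rwa [hT] at h2
  have hsplit : ∑ i ∈ Finset.range n, Real.arcsin (a i) ≤ (K:ℝ)*(π/2) + (1+δ)*f n := by
    rw [Finset.range_eq_Ico, ← Finset.sum_Ico_consecutive _ (Nat.zero_le K) hnK]
    have hA : ∑ i ∈ Finset.Ico 0 K, Real.arcsin (a i) ≤ (K:ℝ)*(π/2) := by
      calc ∑ i ∈ Finset.Ico 0 K, Real.arcsin (a i) ≤ ∑ _i ∈ Finset.Ico 0 K, (π/2) :=
            Finset.sum_le_sum (fun i _ => Real.arcsin_le_pi_div_two _)
        _ = (K:ℝ)*(π/2) := by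
            rw [Finset.sum_const, Nat.card_Ico, Nat.sub_zero, nsmul_eq_mul]
    have hB : ∑ i ∈ Finset.Ico K n, Real.arcsin (a i) ≤ (1+δ)*f n := by
      have hBsum : ∑ i ∈ Finset.Ico K n, Real.arcsin (a i)
          ≤ (1+δ) * ∑ i ∈ Finset.Ico K n, a i := by
        rw [Finset.mul_sum]
        apply Finset.sum_le_sum
        intro i hi
        have hiK : K ≤ i := (Finset.mem_Ico.1 hi).1
        have hax : a i ≤ x₀ := hK i hiK
        apply arcsin_le_mul hδpos hδ1 (ha0 i) (le_trans hax (min_le_right _ _))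
        have h1 : a i ≤ Real.sqrt (δ/2) := le_trans hax (min_le_left _ _)
        calc (a i)^2 ≤ (Real.sqrt (δ/2))^2 := by
              apply pow_le_pow_left₀ (ha0 i) h1
          _ = δ/2 := Real.sq_sqrt (by linarith)
      have hsum_f : ∑ i ∈ Finset.Ico K n, a i ≤ f n := by
        have h1 : ∑ i ∈ Finset.Ico K n, a i ≤ ∑ i ∈ Finset.range n, a i := by
          apply Finset.sum_le_sum_of_subset_of_nonneg
          · rw [Finset.range_eq_Ico]; exact Finset.Ico_subset_Ico (Nat.zero_le K) le_rfl
          · intro i _ _; exact ha0 i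
        have h2 : ∑ i ∈ Finset.range n, a i ≤ f (n-1) := by
          have h3 := hsum (n-1)
          rwa [show (n-1)+1 = n by omega] at h3
        exact le_trans h1 (le_trans h2 (hf (by omega)))
      calc ∑ i ∈ Finset.Ico K n, Real.arcsin (a i) ≤ (1+δ) * ∑ i ∈ Finset.Ico K n, a i := hBsum
        _ ≤ (1+δ)*f n := mul_le_mul_of_nonneg_left hsum_f (by linarith)
    linarith
  have hG0 : 0 ≤ cyclicGap n θ j := by
    rw [cyclicGap]
    split
    · next h =>
      have h1 := (hmono (show j < ⟨(j:ℕ)+1, h⟩ by rw [Fin.lt_def]; simp)).le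
      linarith
    · have h1 := (hIco j).2
      have h2 := (hIco 0).1
      linarith
  set G := cyclicGap n θ j with hGdef
  have hnum : (n:ℝ)*G ≤ 2*π + 2*π*K + (4+4*δ)*f n := by nlinarith
  have hC : 2*π + 2*π*K ≤ (ε/2) * f n := by
    have heq : (ε/2) * C₁ = 2*π + 2*π*K := by
      rw [hC₁def]; field_simp; ring
    nlinarith [mul_nonneg (by linarith : (0:ℝ) ≤ ε/2) (by linarith : 0 ≤ f n - C₁)]
  have hrw : (n:ℝ)/f n * G = ((n:ℝ)*G)/f n := by ring
  rw [hrw, div_le_iff₀ hfpos]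
  nlinarith [mul_nonneg (by linarith : (0:ℝ) ≤ ε/2 - 4*δ + 4*δ) hfpos.le,
    mul_le_mul_of_nonneg_right (show (4+4*δ:ℝ) ≤ 4 + ε/2 by linarith) hfpos.le]
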